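/- arXiv:1611.04385 — 2 statements merged into one kernel-verified Lean document; each statement's English description precedes it below -/
import Mathlib

section
/- The Dougall-type series Ω(7/2, 1/2, 3/2, 5/2, 5/2) = ∑_{k=0}^∞ ((1/2)_k (3/2)_k (5/2)_k^2 / ((4)_k (3)_k (2)_k^2)) · (7/2 + 2k) converges and equals 16 − 1024/(9π²). -/
/-!
With `q n = (1/2)_n / n! = (2n choose n) / 4ⁿ`, the summand is a Gosper-summable hypergeometric
term: it equals `T k - T (k + 1)` for
`T n = (32/9) (q n² (2n+1))² · (2n+1)/(n+1) · (2n+3)/(n+1) · (2n+3)/(n+2)`, and `T 0 = 16`.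
By Wallis' product `q n² (2n+1) → 2/π`, so `T n → (32/9) (2/π)² · 8 = 1024/(9π²)`.
-/

noncomputable def poch (x : ℝ) (n : ℕ) : ℝ := ∏ i ∈ Finset.range n, (x + i)

open Filter Finset Real Topology

lemma poch_succ (x : ℝ) (n : ℕ) : poch x (n + 1) = poch x n * (x + n) :=
  prod_range_succ _ _

lemma poch_pos {x : ℝ} (hx : 0 < x) (n : ℕ) : 0 < poch x n :=
  prod_pos fun _ _ => by positivity

lemma poch_eq_of_add_one {x y : ℝ} (hx : x ≠ 0) (hxy : x + 1 = y) (n : ℕ) :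
    poch y n = poch x n * (x + n) / x := by
  subst hxy
  induction n with
  | zero => simp [poch, hx]
  | succ n ih =>
    rw [poch_succ, poch_succ, ih]
    push_cast
    field_simp
    ring

noncomputable def wallisCoeff (n : ℕ) : ℝ := poch (1/2) n / poch 1 n

lemma wallisCoeff_succ (n : ℕ) :
    wallisCoeff (n + 1) = wallisCoeff n * (2 * n + 1) / (2 * n + 2) := by
  have := (poch_pos one_pos n).ne'
  unfold wallisCoeff
  rw [poch_succ, poch_succ]
  field_simp
  ring

lemma wallis_prod_mul_sq_wallisCoeff (n : ℕ) :
    (∏ i ∈ range n, ((2 : ℝ) * i + 2) / (2 * i + 1) * ((2 * i + 2) / (2 * i + 3)))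
      * (wallisCoeff n ^ 2 * (2 * n + 1)) = 1 := by
  induction n with
  | zero => simp [wallisCoeff, poch]
  | succ n ih =>
    rw [prod_range_succ, wallisCoeff_succ]
    push_cast
    field_simp at ih ⊢
    linear_combination (2 * (n : ℝ) + 3) * ih

lemma tendsto_sq_wallisCoeff_mul :
    Tendsto (fun n : ℕ => wallisCoeff n ^ 2 * (2 * n + 1)) atTop (𝓝 (2 / π)) := by
  have hinv := tendsto_prod_pi_div_two.inv₀ (by positivity)
  rw [inv_div] at hinv
  refine hinv.congr fun n => ?_
  exact (eq_inv_of_mul_eq_one_right (wallis_prod_mul_sq_wallisCoeff n)).symm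

noncomputable def dougallTerm (k : ℕ) : ℝ :=
  poch (1/2) k * poch (3/2) k * poch (5/2) k ^ 2 /
    (poch 4 k * poch 3 k * poch 2 k ^ 2) * ((7:ℝ)/2 + 2 * k)

noncomputable def dougallTail (n : ℕ) : ℝ :=
  32 / 9 * (wallisCoeff n ^ 2 * (2 * n + 1)) ^ 2 *
    ((1 + 2 * n) / (1 + n) * ((3 + 2 * n) / (1 + n)) * ((3 + 2 * n) / (2 + n)))

lemma dougallTerm_nonneg (k : ℕ) : 0 ≤ dougallTerm k := by
  have := poch_pos (x := 1/2) (by norm_num) k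
  have := poch_pos (x := 3/2) (by norm_num) k
  have := poch_pos (x := 5/2) (by norm_num) k
  have := poch_pos (x := 2) (by norm_num) k
  have := poch_pos (x := 3) (by norm_num) k
  have := poch_pos (x := 4) (by norm_num) k
  unfold dougallTerm
  positivity

lemma dougallTerm_eq_sub (k : ℕ) : dougallTerm k = dougallTail k - dougallTail (k + 1) := by
  have hP := (poch_pos one_pos k).ne'
  have hq : poch (1/2) k = wallisCoeff k * poch 1 k := by
    unfold wallisCoeff
    field_simp
  unfold dougallTerm dougallTail
  rw [poch_eq_of_add_one (x := 3/2) (y := 5/2) (by norm_num) (by norm_num),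
    poch_eq_of_add_one (x := 1/2) (y := 3/2) (by norm_num) (by norm_num),
    poch_eq_of_add_one (x := 3) (y := 4) (by norm_num) (by norm_num),
    poch_eq_of_add_one (x := 2) (y := 3) (by norm_num) (by norm_num),
    poch_eq_of_add_one (x := 1) (y := 2) (by norm_num) (by norm_num), hq, wallisCoeff_succ]
  push_cast
  field_simp
  ring

lemma dougallTail_zero : dougallTail 0 = 16 := by
  norm_num [dougallTail, wallisCoeff, poch]

lemma tendsto_dougallTail :
    Tendsto dougallTail atTop (𝓝 (1024 / (9 * π ^ 2))) := by
  have ratio (a b : ℝ) : Tendsto (fun n : ℕ => (a + 2 * n) / (b + n)) atTop (𝓝 2) := by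
    simpa using tendsto_add_mul_div_add_mul_atTop_nhds a b 2 one_ne_zero
  have h := ((tendsto_sq_wallisCoeff_mul.pow 2).const_mul (32 / 9)).mul
    (((ratio 1 1).mul (ratio 3 1)).mul (ratio 3 2))
  have limit_eq : 1024 / (9 * π ^ 2) = 32 / 9 * (2 / π) ^ 2 * (2 * 2 * 2) := by
    field_simp
    norm_num
  rwa [limit_eq]

theorem stmt5 :
    HasSum (fun k : ℕ =>
      poch (1/2) k * poch (3/2) k * poch (5/2) k ^ 2 /
        (poch 4 k * poch 3 k * poch 2 k ^ 2) * ((7:ℝ)/2 + 2 * k))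
      (16 - 1024 / (9 * Real.pi ^ 2)) := by
  change HasSum dougallTerm _
  have partial_sum (n : ℕ) : ∑ k ∈ range n, dougallTerm k = 16 - dougallTail n := by
    simp only [dougallTerm_eq_sub, sum_range_sub', dougallTail_zero]
  rw [hasSum_iff_tendsto_nat_of_nonneg dougallTerm_nonneg]
  simpa only [partial_sum] using tendsto_dougallTail.const_sub 16
end

section
/- If (F, G) is a WZ-pair on ℕ × ℕ, i.e. F(n+1,k) − F(n,k) = G(n,k+1) − G(n,k) for all n,k ≥ 0, and for each k the series ∑_n G(n,k) converges, F(n,k) → 0 as n → ∞ for each fixed k, and ∑_{n} G(n,k) → L as k → ∞, then ∑_{n=0}^∞ G(n,0) = ∑_{k=0}^∞ F(0,k) + L, provided ∑_{k} F(0,k) converges. -/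
theorem stmt10 (F G : ℕ → ℕ → ℝ) (L : ℝ)
    (hWZ : ∀ n k, F (n + 1) k - F n k = G n (k + 1) - G n k)
    (hGsum : ∀ k, Summable fun n => G n k)
    (hF0 : ∀ k, Filter.Tendsto (fun n => F n k) Filter.atTop (nhds 0))
    (hL : Filter.Tendsto (fun k => ∑' n, G n k) Filter.atTop (nhds L))
    (hFsum : Summable fun k => F 0 k) :
    ∑' n, G n 0 = (∑' k, F 0 k) + L := by
  set S : ℕ → ℝ := fun k => ∑' n, G n k with hS
  have hstep : ∀ k, S (k + 1) - S k = -F 0 k := by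
    intro k
    have hsum : Summable fun n => G n (k + 1) - G n k := (hGsum (k + 1)).sub (hGsum k)
    have h1 : HasSum (fun n => G n (k + 1) - G n k) (S (k + 1) - S k) :=
      (hGsum (k + 1)).hasSum.sub (hGsum k).hasSum
    have h2 : Filter.Tendsto (fun N => ∑ n ∈ Finset.range N, (G n (k + 1) - G n k))
        Filter.atTop (nhds (-F 0 k)) := by
      have heq : ∀ N, ∑ n ∈ Finset.range N, (G n (k + 1) - G n k) = F N k - F 0 k := by
        intro N
        calc ∑ n ∈ Finset.range N, (G n (k + 1) - G n k)
            = ∑ n ∈ Finset.range N, (F (n + 1) k - F n k) := by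
              refine Finset.sum_congr rfl fun n _ => (hWZ n k).symm
          _ = F N k - F 0 k := Finset.sum_range_sub (fun n => F n k) N
      simp only [heq]
      have := (hF0 k).sub_const (F 0 k)
      simpa using this
    exact tendsto_nhds_unique (h1.tendsto_sum_nat) h2
  have hSk : ∀ k, S k = S 0 - ∑ j ∈ Finset.range k, F 0 j := by
    intro k
    induction k with
    | zero => simp
    | succ k ih =>
      have := hstep k
      rw [Finset.sum_range_succ]
      linarith
  have hlim : Filter.Tendsto (fun k => S 0 - ∑ j ∈ Finset.range k, F 0 j)
      Filter.atTop (nhds (S 0 - ∑' k, F 0 k)) :=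
    (tendsto_const_nhds.sub hFsum.hasSum.tendsto_sum_nat)
  have : L = S 0 - ∑' k, F 0 k := by
    refine tendsto_nhds_unique ?_ hlim
    exact hL.congr fun k => hSk k
  simp only [hS] at this ⊢
  linarith
end
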